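/- arXiv:2309.01983 — 5 statements merged into one kernel-verified Lean document; each statement's English description precedes it below -/
import Mathlib

section
/- If C is an additive conjucyclic code of length n over 𝔽₄ (an 𝔽₂-subspace closed under the conjucyclic shift T), then its trace dual C^{⊥_Tr} is also conjucyclic. -/
open scoped BigOperators

abbrev F2 := ZMod 2
abbrev F4 := GaloisField 2 2

noncomputable def iota : F2 →+* F4 := algebraMap F2 F4

/-- The trace map of `F4` over `F2`, viewed with values in `F4`: `tr α = α + α²`. -/
noncomputable def tr (a : F4) : F4 := a + a ^ 2
/-- Cyclic shift: `(c₀,…,c_{m-1}) ↦ (c_{m-1},c₀,…,c_{m-2})`. -/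
def cshift {α : Type*} {m : ℕ} (c : Fin m → α) : Fin m → α :=
  fun i => if _ : (i : ℕ) = 0 then c ⟨m - 1, by have := i.isLt; omega⟩
           else c ⟨(i : ℕ) - 1, by have := i.isLt; omega⟩

/-- Conjucyclic shift on `F4ⁿ`: `(c₀,…,c_{n-1}) ↦ (c̄_{n-1},c₀,…,c_{n-2})`,
where conjugation is `α ↦ α²`. -/
noncomputable def Tshift {n : ℕ} (c : Fin n → F4) : Fin n → F4 :=
  fun i => if _ : (i : ℕ) = 0 then (c ⟨n - 1, by have := i.isLt; omega⟩) ^ 2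
           else c ⟨(i : ℕ) - 1, by have := i.isLt; omega⟩

/-- The map `Ψ : F2^{2n} → F4ⁿ`, `Ψ(u)ᵢ = uᵢ + (uᵢ + u_{n+i})ω`. -/
noncomputable def Psi {n : ℕ} (ω : F4) (u : Fin (2 * n) → F2) : Fin n → F4 :=
  fun i => iota (u ⟨(i : ℕ), by have := i.isLt; omega⟩) +
    (iota (u ⟨(i : ℕ), by have := i.isLt; omega⟩) +
      iota (u ⟨n + (i : ℕ), by have := i.isLt; omega⟩)) * ω

/-- Trace dual of a set of vectors in `F4ⁿ` w.r.t. `⟨x,y⟩ = Tr(∑ xᵢyᵢ)`. -/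
noncomputable def traceDual {n : ℕ} (S : Set (Fin n → F4)) : Set (Fin n → F4) :=
  {x | ∀ c ∈ S, tr (∑ i, x i * c i) = 0}

/-- Euclidean dual of a set of vectors in `F2^m`. -/
def dualE {m : ℕ} (S : Set (Fin m → F2)) : Set (Fin m → F2) :=
  {b | ∀ a ∈ S, ∑ i, a i * b i = 0}

/-- The folding map `Φ : F2^{2n} → F2ⁿ`, `Φ(a)ᵢ = aᵢ + a_{n+i}`. -/
def Phi {n : ℕ} (a : Fin (2 * n) → F2) : Fin n → F2 :=
  fun i => a ⟨(i : ℕ), by have := i.isLt; omega⟩ +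
    a ⟨n + (i : ℕ), by have := i.isLt; omega⟩

/-- Coordinatewise trace of a vector in `F4ⁿ`. -/
noncomputable def trVec {n : ℕ} (c : Fin n → F4) : Fin n → F4 :=
  fun i => tr (c i)

noncomputable instance : Fintype F4 := Fintype.ofFinite F4

lemma pow4 (a : F4) : a ^ 4 = a := by
  have h : Fintype.card F4 = 4 := by
    rw [← Nat.card_eq_fintype_card, GaloisField.card 2 2 (by norm_num)]; norm_num
  calc a ^ 4 = a ^ Fintype.card F4 := by rw [h]
  _ = a := FiniteField.pow_card a

lemma tr_add (a b : F4) : tr (a + b) = tr a + tr b := by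
  simp only [tr, add_pow_char]; ring

lemma tr_sq (a : F4) : tr (a ^ 2) = tr a := by
  simp only [tr, ← pow_mul]
  norm_num [pow4 a, add_comm]

lemma sq_inj : Function.Injective (fun a : F4 => a ^ 2) := by
  intro a b h
  simpa using frobenius_inj F4 2 (by simpa [frobenius_def] using h)

lemma Tshift_inj {n : ℕ} : Function.Injective (Tshift (n := n)) := by
  intro a b h
  funext j
  rcases Nat.lt_or_ge ((j : ℕ) + 1) n with hj | hj
  · have := congrFun h ⟨(j : ℕ) + 1, hj⟩
    simpa [Tshift] using this
  · have hn : 0 < n := j.pos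
    have hj' : (j : ℕ) = n - 1 := by omega
    have h0 := congrFun h ⟨0, hn⟩
    simp only [Tshift, dif_pos rfl] at h0
    have h1 := sq_inj h0
    rw [show j = (⟨n - 1, by omega⟩ : Fin n) from Fin.ext hj']
    exact h1

lemma Tshift_surjOn {n : ℕ} (C : Submodule F2 (Fin n → F4))
    (hC : ∀ c ∈ C, Tshift c ∈ C) : ∀ c ∈ C, ∃ c' ∈ C, Tshift c' = c := by
  have hfin : Set.Finite (C : Set (Fin n → F4)) := Set.toFinite _
  have hm : Set.MapsTo Tshift (C : Set (Fin n → F4)) (C : Set (Fin n → F4)) :=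
    fun c hc => hC c hc
  have hinj : Set.InjOn Tshift (C : Set (Fin n → F4)) := Tshift_inj.injOn
  have hb := (Set.Finite.injOn_iff_bijOn_of_mapsTo hfin hm).mp hinj
  intro c hc
  obtain ⟨c', hc', h⟩ := hb.surjOn hc
  exact ⟨c', hc', h⟩

/-- if `C` is an additive conjucyclic code, so is `C^{⊥Tr}`. -/
theorem stmt8 (n : ℕ) (C : Submodule F2 (Fin n → F4))
    (hC : ∀ c ∈ C, Tshift c ∈ C) :
    ∀ x ∈ traceDual (C : Set (Fin n → F4)), Tshift x ∈ traceDual (C : Set (Fin n → F4)) := by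
  intro x hx c hc
  rcases Nat.eq_zero_or_pos n with hn | hn
  · subst hn; simp [tr]
  obtain ⟨m, rfl⟩ : ∃ m, n = m + 1 := ⟨n - 1, by omega⟩
  obtain ⟨c', hc', rfl⟩ := Tshift_surjOn C hC c hc
  have hx' : tr (∑ i, x i * c' i) = 0 := hx c' hc'
  set a : Fin (m + 1) := ⟨m, by omega⟩ with ha
  set t : F4 := x a * c' a with ht
  have hsum : ∑ i, Tshift x i * Tshift c' i = (∑ i, x i * c' i) + t + t ^ 2 := by
    have e : ∀ i : Fin (m + 1), Tshift x i * Tshift c' i =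
        (fun j : Fin (m + 1) => if (j : ℕ) = 0 then t ^ 2
          else x ⟨(j : ℕ) - 1, by omega⟩ * c' ⟨(j : ℕ) - 1, by omega⟩) i := by
      intro i
      by_cases h : (i : ℕ) = 0 <;> simp [Tshift, h, ht, ha, mul_pow]
    rw [Finset.sum_congr rfl (fun i _ => e i)]
    rw [← Equiv.sum_comp (finRotate (m + 1))]
    have e2 : ∀ i : Fin (m + 1),
        (if ((finRotate (m + 1) i : Fin (m + 1)) : ℕ) = 0 then t ^ 2
          else x ⟨((finRotate (m + 1) i : Fin (m + 1)) : ℕ) - 1, by omega⟩ *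
            c' ⟨((finRotate (m + 1) i : Fin (m + 1)) : ℕ) - 1, by omega⟩) =
        Function.update (fun j : Fin (m + 1) => x j * c' j) a (t ^ 2) i := by
      intro i
      by_cases h : i = a
      · subst h
        have hlast : a = Fin.last m := by simp [ha, Fin.ext_iff]
        have h0 : ((finRotate (m + 1) a : Fin (m + 1)) : ℕ) = 0 := by
          rw [finRotate_succ_apply, hlast]
          simp
        rw [if_pos h0, Function.update_self]
      · have hne : (i : ℕ) ≠ m := fun hh => h (Fin.ext (by simp [ha, hh]))
        have h2 : ((finRotate (m + 1) i : Fin (m + 1)) : ℕ) = (i : ℕ) + 1 := by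
          rw [finRotate_succ_apply, Fin.val_add_one]
          have : i ≠ Fin.last m := by simp [Fin.ext_iff]; omega
          simp [this]
        simp only [h2, Nat.add_sub_cancel]
        have hne0 : ((i : ℕ) + 1 ≠ 0) := by omega
        simp [hne0, Function.update_of_ne h]
    rw [Finset.sum_congr rfl (fun i _ => e2 i)]
    rw [Finset.sum_update_of_mem (Finset.mem_univ a)]
    rw [← Finset.add_sum_erase _ _ (Finset.mem_univ a)]
    rw [show Finset.univ \ {a} = Finset.univ.erase a from by
      rw [Finset.sdiff_singleton_eq_erase]]
    have h2 : (t : F4) + t = 0 := CharTwo.add_self_eq_zero t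
    linear_combination -h2
  rw [hsum, tr_add, tr_add, hx', tr_sq]
  have h3 : tr t + tr t = 0 := CharTwo.add_self_eq_zero _
  simpa using h3
end

section
/- If C is an 𝔽₂-subspace of 𝔽₄ⁿ closed under the conjucyclic shift T, then its trace code Tr(C) = {(Tr(c₀),…,Tr(c_{n-1})) : c ∈ C} is a cyclic code of length n over 𝔽₂, i.e., closed under the cyclic shift. -/
open scoped BigOperators

/-- the trace code of an additive conjucyclic code is cyclic. -/
theorem stmt9 (n : ℕ) (C : Submodule F2 (Fin n → F4))
    (hC : ∀ c ∈ C, Tshift c ∈ C) :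
    ∀ x ∈ trVec '' (C : Set (Fin n → F4)), cshift x ∈ trVec '' (C : Set (Fin n → F4)) := by
  rintro x ⟨c, hc, rfl⟩
  refine ⟨Tshift c, hC c hc, ?_⟩
  funext i
  simp only [trVec, Tshift, cshift]
  split_ifs with h
  · have h4 : ∀ a : F4, a ^ 4 = a := by
      intro a
      have : Fintype F4 := Fintype.ofFinite F4
      have h := FiniteField.pow_card a
      rwa [← Nat.card_eq_fintype_card, GaloisField.card 2 2 (by norm_num)] at h
    simp only [tr]
    have : ((c ⟨n - 1, by have := i.isLt; omega⟩) ^ 2) ^ 2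
        = c ⟨n - 1, by have := i.isLt; omega⟩ := by
      rw [← pow_mul]; exact h4 _
    rw [this, add_comm]
  · rfl
end

section
/- If C is an additive conjucyclic code of length n over 𝔽₄, then its trace code is contained in C itself (identifying 𝔽₂ⁿ ⊆ 𝔽₄ⁿ): for every c ∈ C, the vector (Tr(c₀),…,Tr(c_{n-1})) belongs to C. -/
open scoped BigOperators

lemma Tshift_iterate {n : ℕ} (k : ℕ) (hk : k ≤ n) (c : Fin n → F4) (i : Fin n) :
    (Tshift^[k] c) i =
      if h : (i : ℕ) < k then (c ⟨n + i - k, by have := i.isLt; omega⟩) ^ 2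
      else c ⟨(i : ℕ) - k, by have := i.isLt; omega⟩ := by
  induction k generalizing c with
  | zero => simp
  | succ k ih =>
    rw [Function.iterate_succ_apply, ih (k.le_succ.trans hk)]
    have hin := i.isLt
    by_cases h : (i : ℕ) < k
    · rw [dif_pos h, dif_pos (h.trans k.lt_succ_self)]
      have hne : ¬ ((⟨n + i - k, by omega⟩ : Fin n) : ℕ) = 0 := by
        simp only []; omega
      rw [Tshift, dif_neg hne]
      have heq : (⟨((⟨n + i - k, by omega⟩ : Fin n) : ℕ) - 1, by omega⟩ : Fin n) =
          ⟨n + (i : ℕ) - (k + 1), by omega⟩ := Fin.ext (by simp only []; omega)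
      rw [heq]
    · rw [dif_neg h]
      by_cases h2 : (i : ℕ) < k + 1
      · have hik : (i : ℕ) = k := by omega
        rw [dif_pos h2]
        have h0 : ((⟨(i : ℕ) - k, by omega⟩ : Fin n) : ℕ) = 0 := by
          simp only []; omega
        rw [Tshift, dif_pos h0]
        have heq : (⟨n - 1, by omega⟩ : Fin n) =
            ⟨n + (i : ℕ) - (k + 1), by omega⟩ := Fin.ext (by simp only []; omega)
        rw [heq]
      · rw [dif_neg h2]
        have hne : ¬ ((⟨(i : ℕ) - k, by omega⟩ : Fin n) : ℕ) = 0 := by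
          simp only []; omega
        rw [Tshift, dif_neg hne]
        have heq : (⟨((⟨(i : ℕ) - k, by omega⟩ : Fin n) : ℕ) - 1, by omega⟩ : Fin n) =
            ⟨(i : ℕ) - (k + 1), by omega⟩ := Fin.ext (by simp only []; omega)
        rw [heq]

/-- the trace code of an additive conjucyclic code `C` is contained in `C`. -/
theorem stmt10 (n : ℕ) (C : Submodule F2 (Fin n → F4))
    (hC : ∀ c ∈ C, Tshift c ∈ C) :
    ∀ c ∈ C, trVec c ∈ C := by
  intro c hc
  have hiter : ∀ k, Tshift^[k] c ∈ C := by
    intro k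
    induction k with
    | zero => simpa using hc
    | succ k ih => rw [Function.iterate_succ_apply']; exact hC _ ih
  have heq : trVec c = c + Tshift^[n] c := by
    funext i
    rw [Pi.add_apply, Tshift_iterate n le_rfl, dif_pos i.isLt]
    have : (⟨n + (i : ℕ) - n, by have := i.isLt; omega⟩ : Fin n) = i :=
      Fin.ext (by simp)
    rw [this]
    rfl
  rw [heq]
  exact C.add_mem hc (hiter n)
end

section
/- Under the isomorphism Ψ : 𝔽₂^{2n} → 𝔽₄ⁿ, conjucyclic and cyclic structures correspond: an 𝔽₂-subspace D ⊆ 𝔽₂^{2n} is closed under the cyclic shift σ if and only if Ψ(D) is closed under the conjucyclic shift T; equivalently, Ψ ∘ σ = T ∘ Ψ. -/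
open scoped BigOperators

lemma two_eq_zero : (2 : F4) = 0 := by
  have := CharP.cast_eq_zero F4 2
  exact_mod_cast this

lemma iota_sq (a : F2) : (iota a) ^ 2 = iota a := by
  rw [← map_pow]; congr 1; revert a; decide

lemma sq_form {ω : F4} (hω : ω ^ 2 = ω + 1) (a b : F2) :
    (iota a + iota b * ω) ^ 2 = (iota a + iota b) + iota b * ω := by
  have h : (iota a + iota b * ω) ^ 2
      = (iota a)^2 + 2 * (iota a * (iota b * ω)) + (iota b)^2 * ω^2 := by ring
  rw [h, two_eq_zero, iota_sq, iota_sq, hω]; ring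

lemma recover {ω : F4} (hω : ω ^ 2 = ω + 1) (a b : F2) :
    (iota a + iota b * ω) + (iota a + iota b * ω) ^ 2 = iota b := by
  rw [sq_form hω]
  linear_combination (iota a + iota b * ω) * two_eq_zero

lemma inj2 {ω : F4} (hω : ω ^ 2 = ω + 1) {a b a' b' : F2}
    (h : iota a + (iota a + iota b) * ω = iota a' + (iota a' + iota b') * ω) :
    a = a' ∧ b = b' := by
  rw [show iota a + iota b = iota (a + b) by rw [map_add],
      show iota a' + iota b' = iota (a' + b') by rw [map_add]] at h
  have hc : iota (a + b) = iota (a' + b') := by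
    rw [← recover hω a (a+b), ← recover hω a' (a'+b'), h]
  have hab : a + b = a' + b' := iota.injective hc
  have ha : iota a = iota a' := by
    have := h; rw [hc] at this
    exact add_right_cancel this
  have ha' : a = a' := iota.injective ha
  refine ⟨ha', ?_⟩
  have : a + b = a + b' := by rw [hab, ha']
  exact add_left_cancel this

lemma psi_inj {n : ℕ} {ω : F4} (hω : ω ^ 2 = ω + 1) :
    Function.Injective (Psi (n := n) ω) := by
  intro u v h
  funext j
  have hj := j.isLt
  rcases lt_or_ge (j : ℕ) n with hn | hn
  · have hc := congrFun h ⟨(j : ℕ), hn⟩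
    simp only [Psi] at hc
    exact (inj2 hω hc).1
  · have hn' : (j : ℕ) - n < n := by omega
    have hc := congrFun h ⟨(j : ℕ) - n, hn'⟩
    simp only [Psi] at hc
    have hidx : n + ((j : ℕ) - n) = (j : ℕ) := by omega
    simp only [hidx] at hc
    exact (inj2 hω hc).2

lemma key {n : ℕ} {ω : F4} (hω : ω ^ 2 = ω + 1) (u : Fin (2 * n) → F2) :
    Psi ω (cshift u) = Tshift (Psi ω u) := by
  funext i
  have hi := i.isLt
  by_cases h0 : (i : ℕ) = 0
  · simp only [Psi, Tshift, cshift, h0]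
    have hne : ¬ (n + 0 = 0) := by omega
    simp only [dif_pos trivial, dif_neg hne]
    have h1 : n + 0 - 1 = n - 1 := by omega
    have h2 : n + (n - 1) = 2 * n - 1 := by omega
    simp only [h1, h2]
    set a := u ⟨n - 1, by omega⟩
    set b := u ⟨2 * n - 1, by omega⟩
    rw [show iota a + iota b = iota (a + b) by rw [map_add], sq_form hω]
    rw [map_add]
    linear_combination (-(iota a)) * two_eq_zero
  · simp only [Psi, Tshift, cshift]
    rw [dif_neg h0, dif_neg (by omega : ¬ (n + (i:ℕ) = 0)), dif_neg h0]
    have h2 : n + (i:ℕ) - 1 = n + ((i:ℕ) - 1) := by omega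
    simp only [h2]

/-- `Ψ ∘ σ = T ∘ Ψ`; hence `D ⊆ F2^{2n}` is closed under the cyclic shift
iff `Ψ(D)` is closed under the conjucyclic shift. -/
theorem stmt12 (n : ℕ) (ω : F4) (hω : ω ^ 2 = ω + 1) :
    (∀ u : Fin (2 * n) → F2, Psi ω (cshift u) = Tshift (Psi ω u)) ∧
    (∀ D : Submodule F2 (Fin (2 * n) → F2),
      (∀ a ∈ D, cshift a ∈ D) ↔
      (∀ x ∈ Psi ω '' (D : Set (Fin (2 * n) → F2)),
        Tshift x ∈ Psi ω '' (D : Set (Fin (2 * n) → F2)))) := by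
  refine ⟨key hω, fun D => ?_⟩
  constructor
  · rintro h x ⟨a, ha, rfl⟩
    exact ⟨cshift a, h a ha, key hω a⟩
  · intro h a ha
    obtain ⟨b, hb, heq⟩ := h (Psi ω a) ⟨a, ha, rfl⟩
    rw [← key hω] at heq
    rwa [← psi_inj hω heq]
end

section
/- Let D ⊆ 𝔽₂^{2n} be a cyclic code and D^⊥ its Euclidean dual. Define Φ : 𝔽₂^{2n} → 𝔽₂ⁿ by Φ(a)ᵢ = aᵢ + a_{n+i}. Then for all a ∈ D and b ∈ D^⊥, Φ(a)·Φ(b) = 0 in 𝔽₂. -/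
open scoped BigOperators

/-!
Shifting a word of length `2n` cyclically `n` times swaps its two halves, so expanding
`Φ(a)·Φ(b) = ∑ᵢ (aᵢ + a_{n+i})(bᵢ + b_{n+i})` gives `a·b + σⁿ(a)·b`. Both terms vanish when
`b ∈ D^⊥`, because a cyclic code contains `σⁿ(a)` along with `a`.
-/

section CyclicShift

variable {α : Type*} {m : ℕ}

lemma cshift_apply_eq_sub [NeZero m] (c : Fin m → α) (i : Fin m) : cshift c i = c (i - 1) := by
  obtain ⟨k, rfl⟩ := Nat.exists_eq_succ_of_ne_zero (NeZero.ne m)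
  unfold cshift
  split_ifs with h <;> congr 1 <;> ext <;> simp [Fin.coe_sub_one, Fin.ext_iff, h]

open Fin.NatCast in
lemma iterate_cshift_apply [NeZero m] (k : ℕ) (c : Fin m → α) (i : Fin m) :
    cshift^[k] c i = c (i - k) := by
  induction k generalizing i with
  | zero => simp
  | succ k ih =>
    rw [Function.iterate_succ_apply', cshift_apply_eq_sub, ih, Nat.cast_succ, sub_sub,
      add_comm (1 : Fin m)]

end CyclicShift

section HalfShift

variable {α : Type*} {n : ℕ}

lemma sum_fin_two_mul {M : Type*} [AddCommMonoid M] (f : Fin (2 * n) → M) :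
    ∑ i, f i =
      ∑ i : Fin n, f ⟨i, by have := i.isLt; omega⟩ +
        ∑ i : Fin n, f ⟨n + i, by have := i.isLt; omega⟩ := by
  rw [← (finCongr (two_mul n).symm).sum_comp, Fin.sum_univ_add]
  rfl

lemma iterate_cshift_half_apply_lo (c : Fin (2 * n) → α) (i : Fin n) :
    cshift^[n] c ⟨i, by have := i.isLt; omega⟩ = c ⟨n + i, by have := i.isLt; omega⟩ := by
  have : NeZero (2 * n) := ⟨by have := i.isLt; omega⟩
  rw [iterate_cshift_apply]
  congr 1
  ext
  have := i.isLt
  simp only [Fin.val_sub, Fin.val_natCast]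
  rw [Nat.mod_eq_of_lt (by omega : n < 2 * n),
    show 2 * n - n + i = n + i by omega, Nat.mod_eq_of_lt (by omega)]

lemma iterate_cshift_half_apply_hi (c : Fin (2 * n) → α) (i : Fin n) :
    cshift^[n] c ⟨n + i, by have := i.isLt; omega⟩ = c ⟨i, by have := i.isLt; omega⟩ := by
  have : NeZero (2 * n) := ⟨by have := i.isLt; omega⟩
  rw [iterate_cshift_apply]
  congr 1
  ext
  have := i.isLt
  simp only [Fin.val_sub, Fin.val_natCast]
  rw [Nat.mod_eq_of_lt (by omega : n < 2 * n),
    show 2 * n - n + (n + i) = i + 2 * n by omega, Nat.add_mod_right, Nat.mod_eq_of_lt (by omega)]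

end HalfShift

lemma sum_Phi_mul_Phi_eq {n : ℕ} (a b : Fin (2 * n) → F2) :
    ∑ i, Phi a i * Phi b i = ∑ i, a i * b i + ∑ i, cshift^[n] a i * b i := by
  rw [sum_fin_two_mul (fun i => a i * b i), sum_fin_two_mul (fun i => cshift^[n] a i * b i)]
  simp only [iterate_cshift_half_apply_lo, iterate_cshift_half_apply_hi, Phi,
    ← Finset.sum_add_distrib]
  exact Finset.sum_congr rfl fun i _ => by ring

/-- for a binary cyclic code `D` of length `2n`, `Φ(a)·Φ(b) = 0`
for all `a ∈ D`, `b ∈ D^⊥`. -/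
theorem stmt15 (n : ℕ) (D : Submodule F2 (Fin (2 * n) → F2))
    (hcyc : ∀ a ∈ D, cshift a ∈ D) :
    ∀ a ∈ D, ∀ b ∈ dualE (D : Set (Fin (2 * n) → F2)),
      ∑ i, Phi a i * Phi b i = 0 := by
  intro a ha b hb
  have hshift : cshift^[n] a ∈ D := Set.MapsTo.iterate (fun a ha => hcyc a ha) n ha
  rw [sum_Phi_mul_Phi_eq, hb a ha, hb _ hshift, add_zero]
end
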